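/- Let 0 < a < 2 and t > 0, and set λ = −it. Define the boundary-value powers λ₊^p = t^p·e^{−ipπ/2} and λ₋^p = t^p·e^{3ipπ/2} for p ∈ ℝ (corresponding to the two sides of the cut [0, −i∞) for the branch fixed by −π/2 < arg λ < 3π/2). Let η ∈ ℂ satisfy η² = e^{iπa} − 1, let T = [[1/2, −i/2],[1/2, i/2]], and define P₊ = diag(λ₊^{−1/4}, λ₊^{1/4})·T·diag(η^{−1}, η)·diag(λ₊^{a/4}, λ₊^{−a/4}) and P₋ = diag(λ₋^{−1/4}, λ₋^{1/4})·T·diag(η^{−1}, η)·diag(λ₋^{a/4}, λ₋^{−a/4}). Then P₊ = P₋·[[0, ω],[−ω^{−1}, 0]], where ω = 2i·sin(aπ/2)·t^{−a/2}·e^{iaπ/4}. (Thus the global parametrix P^{(gl)}(λ) = λ^{−σ₃/4}·T·η^{−σ₃}·λ^{(a/4)σ₃} satisfies the required jump across the ray Σ₀ = [0, −i∞).) -/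

import Mathlib

/-!
Since `λ₋^p = λ₊^p e^{2πip}`, crossing the cut multiplies the outer factors of the parametrix by
`diag(-i, i)` and `diag(c, c⁻¹)`, where `c = e^{iπa/2}`. The rotation `diag(-i, i) T = T R`,
`R = [[0, -1], [1, 0]]`, moves the first one across `T`; `R` swaps the two diagonal entries and
`R [[0, ω], [-ω⁻¹, 0]] = diag(ω⁻¹, ω)`, so the jump relation reduces to the scalar identity
`ω = η² c⁻¹ λ₊^{-a/2}`, which holds because `η² = c² - 1`, so `η² c⁻¹ = c - c⁻¹ = 2i sin(aπ/2)`.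
-/

/-- The boundary value `λ₊^p = t^p e^{-ipπ/2}` of the power `λ^p` on the cut
`[0, -i∞)` (branch `-π/2 < arg λ < 3π/2`), at `λ = -it`, `t > 0`, from the side
`Re λ > 0`. -/
noncomputable def lamPlus (t p : ℝ) : ℂ :=
  ((t ^ p : ℝ) : ℂ) * Complex.exp (-(Complex.I * (p : ℂ) * (Real.pi : ℂ) / 2))

/-- The boundary value `λ₋^p = t^p e^{3ipπ/2}` from the side `Re λ < 0`. -/
noncomputable def lamMinus (t p : ℝ) : ℂ :=
  ((t ^ p : ℝ) : ℂ) * Complex.exp (3 * Complex.I * (p : ℂ) * (Real.pi : ℂ) / 2)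

section
open Matrix
variable {K : Type*} [Field K]

theorem diagonal_neg_mul_eq_mul_rotation {i : K} (hi : i ^ 2 = -1) :
    diagonal ![-i, i] * !![1 / 2, -i / 2; 1 / 2, i / 2] =
      !![1 / 2, -i / 2; 1 / 2, i / 2] * !![0, -1; 1, 0] := by
  ext k l
  fin_cases k <;> fin_cases l <;> simp [diagonal_fin_two] <;> grind

theorem rotation_mul_diagonal (x y : K) :
    !![0, -1; 1, 0] * diagonal ![x, y] = diagonal ![y, x] * !![(0 : K), -1; 1, 0] := by
  simp [diagonal_fin_two]

theorem rotation_mul_antidiagonal (ω : K) :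
    !![0, -1; 1, 0] * !![0, ω; -ω⁻¹, 0] = diagonal ![ω⁻¹, ω] := by
  simp [diagonal_fin_two]

theorem diagonal_fin_two_mul_diagonal (x y x' y' : K) :
    diagonal ![x, y] * diagonal ![x', y'] = diagonal ![x * x', y * y'] := by
  rw [diagonal_mul_diagonal]
  congr 1
  ext k
  fin_cases k <;> rfl

theorem diagonal_neg_mul_mul_diagonal_mul_antidiagonal {i : K} (hi : i ^ 2 = -1) (x y ω : K) :
    diagonal ![-i, i] * !![1 / 2, -i / 2; 1 / 2, i / 2] * diagonal ![x, y] *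
        !![0, ω; -ω⁻¹, 0] =
      !![1 / 2, -i / 2; 1 / 2, i / 2] * diagonal ![y * ω⁻¹, x * ω] := by
  calc _ = !![1 / 2, -i / 2; 1 / 2, i / 2] * (!![0, -1; 1, 0] * diagonal ![x, y]) *
          !![0, ω; -ω⁻¹, 0] := by
        rw [diagonal_neg_mul_eq_mul_rotation hi, Matrix.mul_assoc _ !![0, -1; 1, 0]]
    _ = !![1 / 2, -i / 2; 1 / 2, i / 2] * diagonal ![y, x] *
          (!![0, -1; 1, 0] * !![0, ω; -ω⁻¹, 0]) := by
        rw [rotation_mul_diagonal]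
        simp only [Matrix.mul_assoc]
    _ = _ := by
        rw [rotation_mul_antidiagonal, Matrix.mul_assoc, diagonal_fin_two_mul_diagonal]

theorem parametrix_jump_of_weight_eq {i : K} (hi : i ^ 2 = -1) (d₁ d₂ e α c : K) {ω : K}
    (hc : c ≠ 0) (hω : ω = e ^ 2 * c⁻¹ * α⁻¹ ^ 2) :
    diagonal ![d₁, d₂] * !![1 / 2, -i / 2; 1 / 2, i / 2] * diagonal ![e⁻¹, e] *
        diagonal ![α, α⁻¹] =
      diagonal ![d₁ * -i, d₂ * i] * !![1 / 2, -i / 2; 1 / 2, i / 2] * diagonal ![e⁻¹, e] *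
        diagonal ![α * c, (α * c)⁻¹] * !![0, ω; -ω⁻¹, 0] := by
  obtain ⟨h₁, h₂⟩ : e⁻¹ * α = e * (α * c)⁻¹ * ω⁻¹ ∧ e * α⁻¹ = e⁻¹ * (α * c) * ω := by
    subst hω
    rcases eq_or_ne e 0 with rfl | he
    · simp
    rcases eq_or_ne α 0 with rfl | hα
    · simp
    constructor <;> field_simp
  calc _ = diagonal ![d₁, d₂] * !![1 / 2, -i / 2; 1 / 2, i / 2] *
          diagonal ![e⁻¹ * α, e * α⁻¹] := by
        rw [Matrix.mul_assoc _ (diagonal _), diagonal_fin_two_mul_diagonal]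
    _ = diagonal ![d₁, d₂] * (diagonal ![-i, i] * !![1 / 2, -i / 2; 1 / 2, i / 2] *
          diagonal ![e⁻¹ * (α * c), e * (α * c)⁻¹] * !![0, ω; -ω⁻¹, 0]) := by
        rw [diagonal_neg_mul_mul_diagonal_mul_antidiagonal hi, h₁, h₂, Matrix.mul_assoc]
    _ = _ := by
        rw [← diagonal_fin_two_mul_diagonal d₁, ← diagonal_fin_two_mul_diagonal e⁻¹]
        simp only [Matrix.mul_assoc]
end

open Complex
open scoped Real

theorem lamMinus_eq_lamPlus_mul (t p : ℝ) :
    lamMinus t p = lamPlus t p * exp (2 * π * I * p) := by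
  rw [lamMinus, lamPlus, mul_assoc ((t ^ p : ℝ) : ℂ), ← exp_add]
  ring_nf

theorem lamPlus_neg {t : ℝ} (ht : 0 ≤ t) (p : ℝ) : lamPlus t (-p) = (lamPlus t p)⁻¹ := by
  rw [lamPlus, lamPlus, Real.rpow_neg ht, ofReal_inv, mul_inv, ← exp_neg]
  push_cast
  ring_nf

theorem lamMinus_neg {t : ℝ} (ht : 0 ≤ t) (p : ℝ) : lamMinus t (-p) = (lamMinus t p)⁻¹ := by
  rw [lamMinus, lamMinus, Real.rpow_neg ht, ofReal_inv, mul_inv, ← exp_neg]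
  push_cast
  ring_nf

theorem lamPlus_add {t : ℝ} (ht : 0 < t) (p q : ℝ) :
    lamPlus t (p + q) = lamPlus t p * lamPlus t q := by
  rw [lamPlus, lamPlus, lamPlus, Real.rpow_add ht, ofReal_mul, mul_mul_mul_comm, ← exp_add]
  push_cast
  ring_nf

theorem lamMinus_neg_one_fourth (t : ℝ) : lamMinus t (-(1 / 4)) = lamPlus t (-(1 / 4)) * -I := by
  rw [lamMinus_eq_lamPlus_mul]
  congr 1
  convert exp_neg_pi_div_two_mul_I using 2
  push_cast
  ring

theorem lamMinus_one_fourth (t : ℝ) : lamMinus t (1 / 4) = lamPlus t (1 / 4) * I := by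
  rw [lamMinus_eq_lamPlus_mul]
  congr 1
  convert exp_pi_div_two_mul_I using 2
  push_cast
  ring

theorem two_mul_I_mul_sin (x : ℂ) : 2 * I * sin x = (exp (2 * x * I) - 1) * (exp (x * I))⁻¹ := by
  have hexp : exp (2 * x * I) = exp (x * I) ^ 2 := by
    rw [← exp_nat_mul]
    push_cast
    ring_nf
  rw [mul_assoc, mul_comm I, ← mul_assoc, two_sin, neg_mul, exp_neg, hexp]
  field_simp
  linear_combination (1 - exp (x * I) ^ 2) * I_sq

theorem jump_weight_eq {a t : ℝ} (ht : 0 < t) {eta : ℂ}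
    (heta : eta ^ 2 = exp (I * π * a) - 1) :
    2 * I * (Real.sin (a * π / 2) : ℂ) * ((t ^ (-(a / 2)) : ℝ) : ℂ) * exp (I * a * π / 4) =
      eta ^ 2 * (exp (2 * π * I * ((a / 4 : ℝ) : ℂ)))⁻¹ * (lamPlus t (a / 4))⁻¹ ^ 2 := by
  have hsin :
      2 * I * (Real.sin (a * π / 2) : ℂ) = eta ^ 2 * (exp (2 * π * I * ((a / 4 : ℝ) : ℂ)))⁻¹ := by
    rw [ofReal_sin, two_mul_I_mul_sin, heta]
    congr 3 <;> push_cast <;> ring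
  have hpow : ((t ^ (-(a / 2)) : ℝ) : ℂ) * exp (I * a * π / 4) = (lamPlus t (a / 4))⁻¹ ^ 2 := by
    rw [← lamPlus_neg ht.le, sq, ← lamPlus_add ht, lamPlus]
    congr 3
    · ring
    · push_cast
      ring
  rw [mul_assoc _ ((t ^ (-(a / 2)) : ℝ) : ℂ), hpow, hsin]

theorem global_parametrix_jump_general (a : ℝ) (t : ℝ) (ht : 0 < t)
    (eta : ℂ) (heta : eta ^ 2 = Complex.exp (Complex.I * (Real.pi : ℂ) * (a : ℂ)) - 1) :
    Matrix.diagonal ![lamPlus t (-(1 / 4)), lamPlus t (1 / 4)] *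
        (!![1 / 2, -Complex.I / 2; 1 / 2, Complex.I / 2] : Matrix (Fin 2) (Fin 2) ℂ) *
        Matrix.diagonal ![eta⁻¹, eta] *
        Matrix.diagonal ![lamPlus t (a / 4), lamPlus t (-(a / 4))] =
      Matrix.diagonal ![lamMinus t (-(1 / 4)), lamMinus t (1 / 4)] *
          (!![1 / 2, -Complex.I / 2; 1 / 2, Complex.I / 2] : Matrix (Fin 2) (Fin 2) ℂ) *
          Matrix.diagonal ![eta⁻¹, eta] *
          Matrix.diagonal ![lamMinus t (a / 4), lamMinus t (-(a / 4))] *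
        !![0, 2 * Complex.I * (Real.sin (a * Real.pi / 2) : ℂ) *
              ((t ^ (-(a / 2)) : ℝ) : ℂ) *
              Complex.exp (Complex.I * (a : ℂ) * (Real.pi : ℂ) / 4);
           -(2 * Complex.I * (Real.sin (a * Real.pi / 2) : ℂ) *
              ((t ^ (-(a / 2)) : ℝ) : ℂ) *
              Complex.exp (Complex.I * (a : ℂ) * (Real.pi : ℂ) / 4))⁻¹, 0] := by
  rw [lamMinus_neg_one_fourth, lamMinus_one_fourth, lamMinus_neg ht.le (a / 4),
    lamMinus_eq_lamPlus_mul t (a / 4), lamPlus_neg ht.le (a / 4), jump_weight_eq ht heta]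
  exact parametrix_jump_of_weight_eq I_sq _ _ _ _ _ (exp_ne_zero _) rfl

/-- The global parametrix `P^{(gl)}(λ) = λ^{-σ₃/4} T η^{-σ₃} λ^{(a/4)σ₃}` satisfies
the jump relation `P₊ = P₋ · [[0, ω], [-ω⁻¹, 0]]` across the ray `Σ₀ = [0, -i∞)`,
where `ω = 2i sin(aπ/2) λ₊^{-a/2}` and `η² = e^{iπa} - 1`. -/
theorem global_parametrix_jump (a : ℝ) (ha : 0 < a) (ha2 : a < 2) (t : ℝ) (ht : 0 < t)
    (eta : ℂ) (heta : eta ^ 2 = Complex.exp (Complex.I * (Real.pi : ℂ) * (a : ℂ)) - 1) :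
    Matrix.diagonal ![lamPlus t (-(1 / 4)), lamPlus t (1 / 4)] *
        (!![1 / 2, -Complex.I / 2; 1 / 2, Complex.I / 2] : Matrix (Fin 2) (Fin 2) ℂ) *
        Matrix.diagonal ![eta⁻¹, eta] *
        Matrix.diagonal ![lamPlus t (a / 4), lamPlus t (-(a / 4))] =
      Matrix.diagonal ![lamMinus t (-(1 / 4)), lamMinus t (1 / 4)] *
          (!![1 / 2, -Complex.I / 2; 1 / 2, Complex.I / 2] : Matrix (Fin 2) (Fin 2) ℂ) *
          Matrix.diagonal ![eta⁻¹, eta] *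
          Matrix.diagonal ![lamMinus t (a / 4), lamMinus t (-(a / 4))] *
        !![0, 2 * Complex.I * (Real.sin (a * Real.pi / 2) : ℂ) *
              ((t ^ (-(a / 2)) : ℝ) : ℂ) *
              Complex.exp (Complex.I * (a : ℂ) * (Real.pi : ℂ) / 4);
           -(2 * Complex.I * (Real.sin (a * Real.pi / 2) : ℂ) *
              ((t ^ (-(a / 2)) : ℝ) : ℂ) *
              Complex.exp (Complex.I * (a : ℂ) * (Real.pi : ℂ) / 4))⁻¹, 0] :=
  global_parametrix_jump_general a t ht eta heta
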